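/- Let V be a multiplicative unitary on K ⊗ K, W a corepresentation of V on H, and W̄ a unitary on K ⊗ H̄ for which there exists a densely defined closed antilinear invertible operator T: H → H̄ with (ω ⊗ ι)(W̄) T ⊆ T (ω̄ ⊗ ι)(W) for all ω ∈ B(K)_*. Then W̄ is itself a corepresentation of V. -/

import Mathlib

/-!
In the blocks `X_{pq} = (ω_{pq} ⊗ ι)(X)` along the first leg, and because `V₁₂` is invertible,
the corepresentation equation `V₁₂ X₁₃ X₂₃ = X₂₃ V₁₂` reads
`X_{ii'} X_{jj'} = ∑ conj V_{(a,b),(i,j)} V_{(a,b'),(i',j')} X_{bb'}`.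
The intertwining relation gives `W̄_{pq} = T W_{qp} T⁻¹`, and `M ↦ T M T⁻¹` is a conjugate-linear
ring homomorphism. Applied to the block identity of `W` at `(i',j'), (i,j)`, it yields the block
identity of `W̄` at `(i,j), (i',j')` after exchanging `b` and `b'`.
-/

open scoped Matrix

noncomputable def leg12 {α β γ : Type*} [DecidableEq γ]
    (X : Matrix (α × β) (α × β) ℂ) : Matrix (α × β × γ) (α × β × γ) ℂ :=
  fun p q => X (p.1, p.2.1) (q.1, q.2.1) * (if p.2.2 = q.2.2 then 1 else 0)

noncomputable def leg13 {α β γ : Type*} [DecidableEq β]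
    (X : Matrix (α × γ) (α × γ) ℂ) : Matrix (α × β × γ) (α × β × γ) ℂ :=
  fun p q => X (p.1, p.2.2) (q.1, q.2.2) * (if p.2.1 = q.2.1 then 1 else 0)

noncomputable def leg23 {α β γ : Type*} [DecidableEq α]
    (X : Matrix (β × γ) (β × γ) ℂ) : Matrix (α × β × γ) (α × β × γ) ℂ :=
  fun p q => X (p.2.1, p.2.2) (q.2.1, q.2.2) * (if p.1 = q.1 then 1 else 0)

/-- The slice map `(ω ⊗ ι)(X)` for the normal functional `ω = tr(ρ ·)` on `B(K)`. -/
noncomputable def sliceMap {ι a b : Type*} [Fintype ι]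
    (ρ : Matrix ι ι ℂ) (X : Matrix (ι × a) (ι × b) ℂ) : Matrix a b ℂ :=
  fun x y => ∑ k, ∑ k', ρ k' k * X (k, x) (k', y)

open scoped ComplexConjugate

noncomputable def legBlock {κ a b : Type*} (X : Matrix (κ × a) (κ × b) ℂ) (p q : κ) :
    Matrix a b ℂ :=
  Matrix.of fun u v => X (p, u) (q, v)

def IsCorepresentation {ι h : Type*} [Fintype ι] [DecidableEq ι] [Fintype h] [DecidableEq h]
    (V : Matrix (ι × ι) (ι × ι) ℂ) (X : Matrix (ι × h) (ι × h) ℂ) : Prop :=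
  leg12 V * leg13 X * leg23 X = leg23 X * leg12 V

lemma sliceMap_single {ι a b : Type*} [Fintype ι] [DecidableEq ι]
    (X : Matrix (ι × a) (ι × b) ℂ) (p q : ι) :
    sliceMap (Matrix.single q p 1) X = legBlock X p q := by
  ext x y
  simp [sliceMap, legBlock, Matrix.single_apply, ite_and, Finset.sum_ite_eq]

section Legs

variable {α β γ : Type*}

lemma leg12_mul [Fintype α] [Fintype β] [Fintype γ] [DecidableEq γ]
    (X Y : Matrix (α × β) (α × β) ℂ) :
    leg12 (X * Y) = (leg12 X * leg12 Y : Matrix (α × β × γ) (α × β × γ) ℂ) := by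
  ext ⟨a, b, z⟩ ⟨a', b', z'⟩
  simp [leg12, Matrix.mul_apply, Fintype.sum_prod_type]

lemma leg12_one [DecidableEq α] [DecidableEq β] [DecidableEq γ] :
    leg12 (1 : Matrix (α × β) (α × β) ℂ) = (1 : Matrix (α × β × γ) (α × β × γ) ℂ) := by
  ext ⟨a, b, z⟩ ⟨a', b', z'⟩
  simp only [leg12, Matrix.one_apply, Prod.ext_iff, ite_and, mul_ite, mul_one, mul_zero]
  split_ifs <;> simp_all

lemma leg13_mul_leg23_apply [Fintype α] [DecidableEq α] [Fintype β] [DecidableEq β] [Fintype γ]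
    (X : Matrix (α × γ) (α × γ) ℂ) (Y : Matrix (β × γ) (β × γ) ℂ)
    (i i' : α) (j j' : β) (u v : γ) :
    (leg13 X * leg23 Y : Matrix (α × β × γ) (α × β × γ) ℂ) (i, j, u) (i', j', v)
      = (legBlock X i i' * legBlock Y j j') u v := by
  simp [leg13, leg23, legBlock, Matrix.mul_apply, Fintype.sum_prod_type]

lemma leg12_star_mul_leg23_mul_leg12_apply [Fintype α] [DecidableEq α] [Fintype β]
    [Fintype γ] [DecidableEq γ]
    (V : Matrix (α × β) (α × β) ℂ) (X : Matrix (β × γ) (β × γ) ℂ)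
    (i i' : α) (j j' : β) (u v : γ) :
    (leg12 (star V) * leg23 X * leg12 V : Matrix (α × β × γ) (α × β × γ) ℂ) (i, j, u) (i', j', v)
      = (∑ a, ∑ b, ∑ b', (conj (V (a, b) (i, j)) * V (a, b') (i', j')) • legBlock X b b') u v := by
  simp only [leg12, leg23, legBlock, Matrix.mul_apply, Matrix.star_apply, RCLike.star_def,
    Fintype.sum_prod_type, mul_ite, ite_mul, mul_one, one_mul, mul_zero, zero_mul, Prod.mk.eta,
    ite_self, Finset.sum_ite_eq, Finset.sum_ite_eq', Finset.mem_univ, if_true,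
    Finset.sum_ite_irrel, Finset.sum_const_zero, Finset.mul_sum, Matrix.smul_of,
    Matrix.sum_apply, Matrix.of_apply, Pi.smul_apply, smul_eq_mul, mul_comm, mul_left_comm]
  exact Finset.sum_congr rfl fun _ _ => Finset.sum_comm

end Legs

section Corepresentation

variable {ι h : Type*} [Fintype ι] [DecidableEq ι] [Fintype h] [DecidableEq h]
  {V : Matrix (ι × ι) (ι × ι) ℂ}

theorem isCorepresentation_iff_legBlock (hV : V ∈ Matrix.unitaryGroup (ι × ι) ℂ)
    {X : Matrix (ι × h) (ι × h) ℂ} :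
    IsCorepresentation V X ↔ ∀ i j i' j', legBlock X i i' * legBlock X j j'
      = ∑ a, ∑ b, ∑ b', (conj (V (a, b) (i, j)) * V (a, b') (i', j')) • legBlock X b b' := by
  let U : (Matrix (ι × ι × h) (ι × ι × h) ℂ)ˣ :=
    ⟨leg12 V, leg12 (star V), by rw [← leg12_mul, hV.2, leg12_one],
      by rw [← leg12_mul, hV.1, leg12_one]⟩
  have hconj : IsCorepresentation V X ↔ leg13 X * leg23 X = leg12 (star V) * leg23 X * leg12 V := by
    rw [IsCorepresentation, mul_assoc, mul_assoc (leg12 (star V))]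
    exact (Units.eq_inv_mul_iff_mul_eq U).symm
  rw [hconj]
  constructor
  · intro hX i j i' j'
    ext u v
    rw [← leg13_mul_leg23_apply, hX, leg12_star_mul_leg23_mul_leg12_apply]
  · intro hX
    ext ⟨i, j, u⟩ ⟨i', j', v⟩
    rw [leg13_mul_leg23_apply, hX, leg12_star_mul_leg23_mul_leg12_apply]

theorem IsCorepresentation.of_legBlock_eq_map {hb : Type*} [Fintype hb] [DecidableEq hb]
    (hV : V ∈ Matrix.unitaryGroup (ι × ι) ℂ) {X : Matrix (ι × h) (ι × h) ℂ}
    (hX : IsCorepresentation V X) (Φ : Matrix h h ℂ →+* Matrix hb hb ℂ)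
    (hΦ : ∀ (c : ℂ) M, Φ (c • M) = conj c • Φ M) {Y : Matrix (ι × hb) (ι × hb) ℂ}
    (hY : ∀ p q, legBlock Y p q = Φ (legBlock X q p)) :
    IsCorepresentation V Y := by
  rw [isCorepresentation_iff_legBlock hV] at hX ⊢
  intro i j i' j'
  calc legBlock Y i i' * legBlock Y j j' = Φ (legBlock X i' i * legBlock X j' j) := by
        rw [hY, hY, map_mul]
    _ = ∑ a, ∑ b, ∑ b', (V (a, b) (i', j') * conj (V (a, b') (i, j))) • legBlock Y b' b := by
        simp only [hX, map_sum, hΦ, hY, map_mul, Complex.conj_conj]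
    _ = ∑ a, ∑ b, ∑ b', (conj (V (a, b) (i, j)) * V (a, b') (i', j')) • legBlock Y b b' := by
        refine Finset.sum_congr rfl fun a _ => ?_
        rw [Finset.sum_comm]
        simp only [mul_comm]

end Corepresentation

section AntilinearConjugation

variable {h hb : Type*} [Fintype h] [DecidableEq h] [Fintype hb] [DecidableEq hb]

/-- `M ↦ T M T⁻¹` for the antilinear `T = T₀ ∘ conj`, whose inverse is `conj ∘ T₁`. -/
noncomputable def conjByAntilinear (T₀ : Matrix hb h ℂ) (T₁ : Matrix h hb ℂ) (h01 : T₀ * T₁ = 1)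
    (h10 : T₁ * T₀ = 1) : Matrix h h ℂ →+* Matrix hb hb ℂ where
  toFun M := T₀ * M.map conj * T₁
  map_one' := by simp [h01]
  map_mul' M N := by
    simp only [Matrix.map_mul, Matrix.mul_assoc]
    rw [← Matrix.mul_assoc T₁ T₀, h10, Matrix.one_mul]
  map_zero' := by simp
  map_add' M N := by simp [Matrix.map_add, Matrix.mul_add, Matrix.add_mul]

lemma conjByAntilinear_smul (T₀ : Matrix hb h ℂ) (T₁ : Matrix h hb ℂ) (h01 : T₀ * T₁ = 1)
    (h10 : T₁ * T₀ = 1) (c : ℂ) (M : Matrix h h ℂ) :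
    conjByAntilinear T₀ T₁ h01 h10 (c • M) = conj c • conjByAntilinear T₀ T₁ h01 h10 M := by
  simp [conjByAntilinear, Matrix.map_smul' _ _ _ (map_mul _)]

end AntilinearConjugation

lemma legBlock_eq_of_sliceMap_mul_eq {ι h hb : Type*} [Fintype ι] [DecidableEq ι] [Fintype h]
    [Fintype hb] [DecidableEq hb]
    {W : Matrix (ι × h) (ι × h) ℂ} {Wb : Matrix (ι × hb) (ι × hb) ℂ} {T₀ : Matrix hb h ℂ}
    {T₁ : Matrix h hb ℂ} (h01 : T₀ * T₁ = 1)
    (hT : ∀ ρ : Matrix ι ι ℂ, sliceMap ρ Wb * T₀ = T₀ * (sliceMap (star ρ) W).map conj)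
    (p q : ι) :
    legBlock Wb p q = T₀ * (legBlock W q p).map conj * T₁ := by
  have hpq := hT (Matrix.single q p 1)
  rw [Matrix.star_eq_conjTranspose, Matrix.conjTranspose_single, star_one, sliceMap_single,
    sliceMap_single] at hpq
  rw [← hpq, Matrix.mul_assoc, h01, Matrix.mul_one]

theorem conjugate_of_corepresentation_is_corepresentation_general
    {ι h hb : Type*} [Fintype ι] [DecidableEq ι] [Fintype h] [DecidableEq h]
    [Fintype hb] [DecidableEq hb]
    (V : Matrix (ι × ι) (ι × ι) ℂ)
    (hVu : V ∈ Matrix.unitaryGroup (ι × ι) ℂ)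
    (W : Matrix (ι × h) (ι × h) ℂ)
    (hW : leg12 V * leg13 W * leg23 W = leg23 W * leg12 V)
    (Wb : Matrix (ι × hb) (ι × hb) ℂ)
    (T₀ : Matrix hb h ℂ)
    (hT₀ : ∃ T₁ : Matrix h hb ℂ, T₀ * T₁ = 1 ∧ T₁ * T₀ = 1)
    (hT : ∀ ρ : Matrix ι ι ℂ,
      sliceMap ρ Wb * T₀ = T₀ * (sliceMap (star ρ) W).map (starRingEnd ℂ)) :
    leg12 V * leg13 Wb * leg23 Wb = leg23 Wb * leg12 V := by
  obtain ⟨T₁, h01, h10⟩ := hT₀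
  exact IsCorepresentation.of_legBlock_eq_map hVu hW (conjByAntilinear T₀ T₁ h01 h10)
    (conjByAntilinear_smul T₀ T₁ h01 h10) (legBlock_eq_of_sliceMap_mul_eq h01 hT)

/-- Let `V` be a multiplicative unitary on `K ⊗ K`, `W` a corepresentation of `V` on
`H`, and `W̄` a unitary on `K ⊗ H̄` for which there is a (closed, invertible)
antilinear operator `T : H → H̄` with `(ω ⊗ ι)(W̄) T = T (ω̄ ⊗ ι)(W)` for all
`ω ∈ B(K)_*`.  (Antilinear operators are written `T = T₀ ∘ conj` with `T₀`
an invertible matrix; `ω = tr(ρ ·)` has `ω̄ = tr(ρ* ·)`, and conjugating an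
operator by the coordinate conjugation replaces its matrix by its entrywise
conjugate.)  Then `W̄` is itself a corepresentation of `V`. -/
theorem conjugate_of_corepresentation_is_corepresentation
    {ι h hb : Type*} [Fintype ι] [DecidableEq ι] [Fintype h] [DecidableEq h]
    [Fintype hb] [DecidableEq hb]
    (V : Matrix (ι × ι) (ι × ι) ℂ)
    (hVu : V ∈ Matrix.unitaryGroup (ι × ι) ℂ)
    (hpent : leg12 V * leg13 V * leg23 V = leg23 V * leg12 V)
    (W : Matrix (ι × h) (ι × h) ℂ)
    (hWu : W ∈ Matrix.unitaryGroup (ι × h) ℂ)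
    (hW : leg12 V * leg13 W * leg23 W = leg23 W * leg12 V)
    (Wb : Matrix (ι × hb) (ι × hb) ℂ)
    (hWbu : Wb ∈ Matrix.unitaryGroup (ι × hb) ℂ)
    (T₀ : Matrix hb h ℂ)
    (hT₀ : ∃ T₁ : Matrix h hb ℂ, T₀ * T₁ = 1 ∧ T₁ * T₀ = 1)
    (hT : ∀ ρ : Matrix ι ι ℂ,
      sliceMap ρ Wb * T₀ = T₀ * (sliceMap (star ρ) W).map (starRingEnd ℂ)) :
    leg12 V * leg13 Wb * leg23 Wb = leg23 Wb * leg12 V :=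
  conjugate_of_corepresentation_is_corepresentation_general V hVu W hW Wb T₀ hT₀ hT
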